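/- Let H be an m×n array of e×e CPMs and/or ZMs given by the e-fold dispersion of an m×n base matrix B over GF(2^r), e = 2^r − 1. Let μ_0 = rank(B^{∘0}) and μ_1 = rank(B). Then rank(H) ≤ μ_0 + Σ_{i=1}^{r−1} C(r,i) · min{m, n, μ_1^i}. -/

import Mathlib

/-!
Over `F = GF(2^r)` with `e = 2^r - 1`, for `x ≠ 0` the indicator `[x = y]` equals
`∑_{k<e} (y/x)^k` with `0^0 := 0`: for `y ≠ 0` it is a geometric sum whose ratio satisfies
`z^e = 1`, so it equals `e = 1` if `y = x` and `0` otherwise. Applied with `x = α^(u-s)`, this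
writes `H`, read over `F`, as `∑_{k<e} D_k`, where `D_k` is `B^{∘k}` blown up to `e × e` blocks
and rescaled by diagonal matrices, so `rank D_k ≤ rank B^{∘k}`. Extending the field does not lower
the rank, and `rank B^{∘k} ≤ μ₁^{wt k}` because the Frobenius gives `rank B^{∘2k} ≤ rank B^{∘k}`
while `rank (A ⊙ C) ≤ rank A * rank C`. Finally exactly `C(r,i)` exponents `0 < k < e` have
binary weight `i`.
-/

open Finset Matrix

def binaryWeight (k : ℕ) : ℕ := k.bitIndices.length

@[simp] theorem binaryWeight_zero : binaryWeight 0 = 0 := rfl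

@[simp] theorem binaryWeight_two_mul (k : ℕ) : binaryWeight (2 * k) = binaryWeight k := by
  simp [binaryWeight]

@[simp] theorem binaryWeight_two_mul_add_one (k : ℕ) :
    binaryWeight (2 * k + 1) = binaryWeight k + 1 := by
  simp [binaryWeight]

theorem binaryWeight_eq_card (k : ℕ) : binaryWeight k = k.bitIndices.toFinset.card :=
  (List.toFinset_card_of_nodup Nat.bitIndices_nodup).symm

theorem binaryWeight_two_pow_sub_one (r : ℕ) : binaryWeight (2 ^ r - 1) = r := by
  have hsum : ∑ i ∈ range r, 2 ^ i = 2 ^ r - 1 := by simpa using Nat.geomSum_eq le_rfl r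
  rw [binaryWeight_eq_card, ← hsum, Finset.toFinset_bitIndices_sum_two_pow, card_range]

theorem sum_range_two_pow_apply_binaryWeight {M : Type*} [AddCommMonoid M] (g : ℕ → M) (r : ℕ) :
    ∑ k ∈ range (2 ^ r), g (binaryWeight k) = ∑ i ∈ range (r + 1), r.choose i • g i := by
  have hpow := sum_powerset_apply_card g (x := range r)
  rw [card_range] at hpow
  rw [← hpow]
  refine sum_nbij' (fun k => k.bitIndices.toFinset) (fun s => ∑ i ∈ s, 2 ^ i) ?_ ?_ ?_ ?_ ?_
  · intro k hk
    simp only [mem_range, mem_powerset] at hk ⊢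
    intro i hi
    rw [List.mem_toFinset] at hi
    exact mem_range.2 <| (Nat.pow_lt_pow_iff_right (by norm_num)).1 <|
      (Nat.two_pow_le_of_mem_bitIndices hi).trans_lt hk
  · intro s hs
    simp only [mem_range, mem_powerset] at hs ⊢
    exact Nat.geomSum_lt le_rfl fun i hi => mem_range.1 (hs hi)
  · intro k _
    exact Finset.sum_toFinset_bitIndices_two_pow k
  · intro s _
    exact Finset.toFinset_bitIndices_sum_two_pow s
  · intro k _
    rw [binaryWeight_eq_card]

theorem sum_Ico_two_pow_sub_one_apply_binaryWeight {M : Type*} [AddCancelCommMonoid M]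
    (g : ℕ → M) (r : ℕ) :
    ∑ k ∈ Ico 1 (2 ^ r - 1), g (binaryWeight k) = ∑ i ∈ Icc 1 (r - 1), r.choose i • g i := by
  rcases r with _ | r
  · simp
  have hfull := sum_range_two_pow_apply_binaryWeight g (r + 1)
  rw [← Nat.sub_add_cancel (Nat.one_le_two_pow), sum_range_succ,
    sum_range_eq_add_Ico _ (by simp), sum_range_succ, sum_range_eq_add_Ico _ (by omega),
    Ico_add_one_right_eq_Icc, binaryWeight_two_pow_sub_one] at hfull
  simpa using hfull

namespace Matrix

variable {m n K L : Type*} [Fintype n] [Field K] [Field L]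

theorem rank_add_le (A B : Matrix m n K) : (A + B).rank ≤ A.rank + B.rank := by
  rw [rank, rank, rank, mulVecLin_add]
  exact (Submodule.finrank_mono (LinearMap.range_add_le _ _)).trans
    (Submodule.finrank_add_le_finrank_add_finrank _ _)

theorem rank_sum_le {ι : Type*} (s : Finset ι) (A : ι → Matrix m n K) :
    (∑ i ∈ s, A i).rank ≤ ∑ i ∈ s, (A i).rank :=
  le_sum_of_subadditive (rank : Matrix m n K → ℕ) rank_zero.le rank_add_le s A

variable [Fintype m]

theorem exists_rank_factorization (A : Matrix m n K) :
    ∃ (C : Matrix m (Fin A.rank) K) (R : Matrix (Fin A.rank) n K)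
      (D : Matrix (Fin A.rank) m K) (E : Matrix n (Fin A.rank) K),
      A = C * R ∧ D * C = 1 ∧ R * E = 1 := by
  classical
  let b := Module.finBasisOfFinrankEq K (LinearMap.range A.mulVecLin) (n := A.rank) rfl
  let ι := (LinearMap.range A.mulVecLin).subtype ∘ₗ b.equivFun.symm.toLinearMap
  let π := b.equivFun.toLinearMap ∘ₗ A.mulVecLin.rangeRestrict
  obtain ⟨ι', hι'⟩ := ι.exists_leftInverse_of_injective <|
    LinearMap.ker_eq_bot.mpr (Subtype.val_injective.comp b.equivFun.symm.injective)
  obtain ⟨π', hπ'⟩ := π.exists_rightInverse_of_surjective <|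
    LinearMap.range_eq_top.mpr (b.equivFun.surjective.comp A.mulVecLin.surjective_rangeRestrict)
  refine ⟨ι.toMatrix', π.toMatrix', ι'.toMatrix', π'.toMatrix', ?_, ?_, ?_⟩
  · rw [← LinearMap.toMatrix'_comp]
    have : ι ∘ₗ π = A.mulVecLin := by ext; simp [ι, π]
    rw [this]
    exact (LinearMap.toMatrix'_toLin' A).symm
  · rw [← LinearMap.toMatrix'_comp, hι', LinearMap.toMatrix'_id]
  · rw [← LinearMap.toMatrix'_comp, hπ', LinearMap.toMatrix'_id]

theorem rank_map_le (A : Matrix m n K) (f : K →+* L) : (A.map f).rank ≤ A.rank := by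
  obtain ⟨C, R, -, -, hA, -, -⟩ := exists_rank_factorization A
  have hAf : A.map f = C.map f * R.map f := by rw [← Matrix.map_mul, ← hA]
  calc (A.map f).rank ≤ Fintype.card (Fin A.rank) :=
        hAf ▸ (rank_mul_le_left _ _).trans (rank_le_card_width _)
    _ = A.rank := Fintype.card_fin _

theorem rank_le_rank_map (A : Matrix m n K) (f : K →+* L) : A.rank ≤ (A.map f).rank := by
  classical
  obtain ⟨C, R, D, E, hA, hDC, hRE⟩ := exists_rank_factorization A
  have hDAE : D * A * E = 1 :=
    calc D * A * E = D * C * (R * E) := by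
          rw [Matrix.mul_assoc D C, ← Matrix.mul_assoc C, ← hA, Matrix.mul_assoc]
      _ = 1 := by rw [hDC, hRE, Matrix.one_mul]
  calc A.rank = (1 : Matrix (Fin A.rank) (Fin A.rank) L).rank := by rw [rank_one, Fintype.card_fin]
    _ = (D.map f * A.map f * E.map f).rank := by
      rw [← Matrix.map_mul, ← Matrix.map_mul, hDAE, Matrix.map_one _ f.map_zero f.map_one]
    _ ≤ (A.map f).rank := (rank_mul_le_left _ _).trans (rank_mul_le_right _ _)

theorem rank_hadamard_le (A B : Matrix m n K) : (A ⊙ B).rank ≤ A.rank * B.rank := by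
  obtain ⟨C₁, R₁, -, -, hA, -, -⟩ := exists_rank_factorization A
  obtain ⟨C₂, R₂, -, -, hB, -, -⟩ := exists_rank_factorization B
  have hfactor : A ⊙ B = (of fun i (ab : Fin A.rank × Fin B.rank) => C₁ i ab.1 * C₂ i ab.2) *
      of fun (ab : Fin A.rank × Fin B.rank) j => R₁ ab.1 j * R₂ ab.2 j := by
    ext i j
    rw [hadamard_apply, congrFun (congrFun hA i) j, congrFun (congrFun hB i) j]
    simp only [mul_apply, of_apply, Fintype.sum_prod_type, sum_mul_sum]
    exact sum_congr rfl fun _ _ => sum_congr rfl fun _ _ => by ring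
  rw [hfactor]
  refine (rank_mul_le_left _ _).trans ((rank_le_card_width _).trans ?_)
  simp

theorem rank_of_mul_apply_mul_le {ι κ : Type*} [Fintype ι] [Fintype κ] (E : Matrix m n K)
    (a : ι → K) (b : κ → K) :
    (of fun (x : m × ι) (y : n × κ) => a x.2 * E x.1 y.1 * b y.2).rank ≤ E.rank := by
  classical
  have : (of fun (x : m × ι) (y : n × κ) => a x.2 * E x.1 y.1 * b y.2) =
      (Matrix.diagonal (a ∘ Prod.snd) : Matrix (m × ι) (m × ι) K) *
        E.submatrix (Prod.fst : m × ι → m) (Prod.fst : n × κ → n) *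
        (Matrix.diagonal (b ∘ Prod.snd) : Matrix (n × κ) (n × κ) K) := by
    ext x y
    simp
  rw [this]
  exact (rank_mul_le_left _ _).trans ((rank_mul_le_right _ _).trans (rank_submatrix_le _ _ _))

theorem rank_map_pow_le [CharP K 2] (B : Matrix m n K) (k : ℕ) :
    (B.map (· ^ k)).rank ≤ B.rank ^ binaryWeight k := by
  have hfrob : ∀ k, B.map (· ^ (2 * k)) = (B.map (· ^ k)).map (frobenius K 2) := fun k => by
    ext
    simp [frobenius_def, ← pow_mul, mul_comm]
  induction k using Nat.evenOddRec with
  | h0 =>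
    have hones : B.map (· ^ 0) = vecMulVec (1 : m → K) (1 : n → K) := by ext; simp [vecMulVec]
    rw [hones, binaryWeight_zero, pow_zero]
    exact rank_vecMulVec_le _ _
  | h_even k ih =>
    rw [hfrob, binaryWeight_two_mul]
    exact (rank_map_le _ _).trans ih
  | h_odd k ih =>
    have hodd : B.map (· ^ (2 * k + 1)) = B ⊙ B.map (· ^ (2 * k)) := by
      ext
      simp [pow_succ, mul_comm]
    rw [hodd, binaryWeight_two_mul_add_one, pow_succ', hfrob]
    exact (rank_hadamard_le _ _).trans (Nat.mul_le_mul_left _ ((rank_map_le _ _).trans ih))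

end Matrix

section Dispersion

variable {F : Type*} [Field F] [DecidableEq F] {m n : Type*}

/-- The paper's entrywise power `B^{∘k}`, with `0 ^ 0 := 0`. -/
def Matrix.hadamardPow (B : Matrix m n F) (k : ℕ) : Matrix m n F :=
  B.map fun y => if y = 0 then 0 else y ^ k

theorem Matrix.hadamardPow_zero (B : Matrix m n F) :
    B.hadamardPow 0 = of fun i j => if B i j = 0 then 0 else 1 := by
  ext; simp [hadamardPow]

theorem Matrix.hadamardPow_of_ne_zero (B : Matrix m n F) {k : ℕ} (hk : k ≠ 0) :
    B.hadamardPow k = B.map (· ^ k) := by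
  ext i j
  by_cases h : B i j = 0 <;> simp [hadamardPow, h, hk]

theorem FiniteField.sum_range_card_sub_one_pow [Fintype F] {z : F} (hz : z ≠ 0) :
    ∑ k ∈ range (Fintype.card F - 1), z ^ k = if z = 1 then -1 else 0 := by
  split_ifs with h
  · simp [h, Nat.cast_sub Fintype.card_pos]
  · rw [geom_sum_eq h, FiniteField.pow_card_sub_one_eq_one z hz, sub_self, zero_div]

def dispersionComponent (α : F) (B : Matrix m n F) (e k : ℕ) :
    Matrix (m × Fin e) (n × Fin e) F :=
  of fun x y => α ^ ((x.2 : ℕ) * k) * B.hadamardPow k x.1 y.1 * α⁻¹ ^ ((y.2 : ℕ) * k)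

theorem sum_dispersionComponent_apply [Fintype F] [CharP F 2] {e : ℕ}
    (he : e = Fintype.card F - 1) {α : F} (hα : α ≠ 0) (B : Matrix m n F)
    (x : m × Fin e) (y : n × Fin e) :
    ∑ k ∈ range e, dispersionComponent α B e k x y =
      if α ^ ((y.2 - x.2 : Fin e) : ℕ) = B x.1 y.1 then 1 else 0 := by
  have : NeZero e := ⟨x.2.pos.ne'⟩
  set z := α ^ ((y.2 - x.2 : Fin e) : ℕ)
  have hz : z ≠ 0 := pow_ne_zero _ hα
  have hshift : α ^ (x.2 : ℕ) * z = α ^ (y.2 : ℕ) := by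
    rw [← pow_add, pow_eq_pow_mod _ (he ▸ FiniteField.pow_card_sub_one_eq_one α hα),
      ← Fin.val_add, add_sub_cancel]
  have hterm : ∀ k, dispersionComponent α B e k x y = B.hadamardPow k x.1 y.1 * z⁻¹ ^ k := by
    intro k
    have hcancel : (α ^ (x.2 : ℕ)) ^ k * (α ^ (x.2 : ℕ))⁻¹ ^ k = 1 := by
      rw [← mul_pow, mul_inv_cancel₀ (pow_ne_zero _ hα), one_pow]
    rw [dispersionComponent, of_apply, pow_mul, pow_mul, inv_pow, ← hshift, mul_inv, mul_pow]
    linear_combination (B.hadamardPow k x.1 y.1 * z⁻¹ ^ k) * hcancel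
  simp_rw [hterm]
  by_cases hB : B x.1 y.1 = 0
  · simp [hadamardPow, hB, hz]
  · simp only [hadamardPow, map_apply, if_neg hB, ← mul_pow]
    have hgeom := FiniteField.sum_range_card_sub_one_pow (mul_ne_zero hB (inv_ne_zero hz))
    rw [← he] at hgeom
    simp only [hgeom, mul_inv_eq_one₀ hz, CharTwo.neg_eq, eq_comm]

theorem rank_dispersionComponent_le [Fintype m] [Fintype n] (α : F) (B : Matrix m n F)
    (e k : ℕ) :
    (dispersionComponent α B e k).rank ≤ (B.hadamardPow k).rank :=
  rank_of_mul_apply_mul_le (B.hadamardPow k) (fun s : Fin e => α ^ ((s : ℕ) * k))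
    fun u : Fin e => α⁻¹ ^ ((u : ℕ) * k)

end Dispersion

/-- Upper bound on the rank of the CPM/ZM dispersion `H` of a base matrix `B`:
`rank(H) ≤ μ₀ + Σ_{i=1}^{r-1} C(r,i)·min{m, n, μ₁^i}`. -/
theorem stmt14 {r e m n : ℕ} (he : e = 2 ^ r - 1) (he0 : 0 < e)
    {F : Type*} [Field F] [Fintype F] [DecidableEq F] [CharP F 2]
    (hF : Fintype.card F = 2 ^ r)
    (α : F) (hα : orderOf α = e)
    (B : Matrix (Fin m) (Fin n) F)
    (H : Matrix (Fin m × Fin e) (Fin n × Fin e) (ZMod 2))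
    (hH : ∀ p q, H p q = if α ^ ((q.2 - p.2 : Fin e) : ℕ) = B p.1 q.1 then 1 else 0) :
    H.rank ≤ (Matrix.of fun i j => if B i j = 0 then (0 : F) else 1).rank +
      ∑ i ∈ Finset.Icc 1 (r - 1), Nat.choose r i * min (min m n) (B.rank ^ i) := by
  have hα0 : α ≠ 0 := by
    rintro rfl
    rw [orderOf_zero] at hα
    omega
  set D := dispersionComponent α B e
  have hdecomp : H.map (ZMod.castHom dvd_rfl F) = ∑ k ∈ range e, D k := by
    ext x y
    rw [map_apply, hH, Matrix.sum_apply, sum_dispersionComponent_apply (by rw [hF, he]) hα0]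
    split_ifs <;> simp
  have hD : ∀ k ∈ Ico 1 e, (D k).rank ≤ min (min m n) (B.rank ^ binaryWeight k) := by
    intro k hk
    have hk0 : k ≠ 0 := by rw [mem_Ico] at hk; omega
    refine (rank_dispersionComponent_le α B e k).trans (le_min (le_min ?_ ?_) ?_)
    · simpa using rank_le_card_height (B.hadamardPow k)
    · simpa using rank_le_card_width (B.hadamardPow k)
    · exact B.hadamardPow_of_ne_zero hk0 ▸ B.rank_map_pow_le k
  calc H.rank ≤ (H.map (ZMod.castHom dvd_rfl F)).rank := rank_le_rank_map H _
    _ ≤ ∑ k ∈ range e, (D k).rank := hdecomp ▸ rank_sum_le _ _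
    _ = (D 0).rank + ∑ k ∈ Ico 1 e, (D k).rank := sum_range_eq_add_Ico _ he0
    _ ≤ (B.hadamardPow 0).rank + ∑ k ∈ Ico 1 e, min (min m n) (B.rank ^ binaryWeight k) :=
        add_le_add (rank_dispersionComponent_le α B e 0) (sum_le_sum hD)
    _ = _ := by
        rw [hadamardPow_zero, he,
          sum_Ico_two_pow_sub_one_apply_binaryWeight (fun i => min (min m n) (B.rank ^ i))]
        simp only [smul_eq_mul]
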